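/- arXiv:2102.00443 — 7 statements merged into one kernel-verified Lean document; each statement's English description precedes it below -/
import Mathlib

section
/- Let v be a pattern of length ℓ ≥ 2 with d ≥ 2 distinct letters, and let k > d be an integer. Then for every n > ℓ·C(k,d), the number of k-ary words of length n avoiding v satisfies the upper bound f_0^v([k]^n) ≤ Σ_{i=0}^{ℓ·C(k,d)} C(n,i)·(k-d+1)^i·(d-1)^{n-i}, where C(·,·) denotes binomial coefficients (this is the bound (d-1)^n·Σ_{i=0}^{ℓ·C(k,d)} C(n,i)·((k-d+1)/(d-1))^i in integer form). -/
/-- An occurrence of the pattern `v` in the word `w` is a strictly increasing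
sequence of indices along which `w` is order-isomorphic to `v`. -/
def IsOcc {l n k : ℕ} (v : Fin l → ℕ) (w : Fin n → Fin k) (j : Fin l → Fin n) : Prop :=
  StrictMono j ∧ ∀ p q : Fin l,
    ((w (j p) < w (j q)) ↔ (v p < v q)) ∧ ((w (j p) = w (j q)) ↔ (v p = v q))

/-- `occCount v w` is the number of occurrences of the pattern `v` in the word `w`. -/
noncomputable def occCount {l n k : ℕ} (v : Fin l → ℕ) (w : Fin n → Fin k) : ℕ :=
  Nat.card {j : Fin l → Fin n // IsOcc v w j}

/-- `fword v r k n` is the number of `k`-ary words of length `n` with exactly `r`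
occurrences of the pattern `v`. -/
noncomputable def fword {l : ℕ} (v : Fin l → ℕ) (r k n : ℕ) : ℕ :=
  Nat.card {w : Fin n → Fin k // occCount v w = r}

/-- `fperm v r n` is the number of permutations of `[n]` with exactly `r`
occurrences of the pattern `v`. -/
noncomputable def fperm {l : ℕ} (v : Fin l → ℕ) (r n : ℕ) : ℕ :=
  Nat.card {w : Fin n → Fin n // Function.Injective w ∧ occCount v w = r}

namespace P1
open List Finset

variable {l d k n : ℕ}

noncomputable def rkF (v : Fin l → ℕ) (hd : (Finset.univ.image v).card = d) (p : Fin l) :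
    Fin d :=
  ((Finset.univ.image v).orderIsoOfFin hd).symm
    ⟨v p, Finset.mem_image_of_mem v (Finset.mem_univ p)⟩

lemma rkF_lt_iff (v : Fin l → ℕ) (hd : (Finset.univ.image v).card = d) (p q : Fin l) :
    rkF v hd p < rkF v hd q ↔ v p < v q := by
  unfold rkF
  rw [OrderIso.lt_iff_lt]
  exact Subtype.mk_lt_mk

lemma rkF_eq_iff (v : Fin l → ℕ) (hd : (Finset.univ.image v).card = d) (p q : Fin l) :
    rkF v hd p = rkF v hd q ↔ v p = v q := by
  unfold rkF
  rw [EmbeddingLike.apply_eq_iff_eq]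
  exact Subtype.mk_eq_mk

noncomputable def tgtF (v : Fin l → ℕ) (hd : (Finset.univ.image v).card = d)
    (S : Finset (Fin k)) (hS : S.card = d) (p : Fin l) : Fin k :=
  (S.orderIsoOfFin hS (rkF v hd p) : Fin k)

lemma tgtF_mem (v : Fin l → ℕ) (hd : (Finset.univ.image v).card = d)
    (S : Finset (Fin k)) (hS : S.card = d) (p : Fin l) : tgtF v hd S hS p ∈ S :=
  (S.orderIsoOfFin hS (rkF v hd p)).2

lemma tgtF_lt_iff (v : Fin l → ℕ) (hd : (Finset.univ.image v).card = d)
    (S : Finset (Fin k)) (hS : S.card = d) (p q : Fin l) :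
    tgtF v hd S hS p < tgtF v hd S hS q ↔ v p < v q := by
  unfold tgtF
  rw [← rkF_lt_iff v hd p q, ← OrderIso.lt_iff_lt (S.orderIsoOfFin hS)]
  exact Subtype.coe_lt_coe

lemma tgtF_eq_iff (v : Fin l → ℕ) (hd : (Finset.univ.image v).card = d)
    (S : Finset (Fin k)) (hS : S.card = d) (p q : Fin l) :
    tgtF v hd S hS p = tgtF v hd S hS q ↔ v p = v q := by
  unfold tgtF
  rw [← rkF_eq_iff v hd p q, ← EmbeddingLike.apply_eq_iff_eq (S.orderIsoOfFin hS)]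
  exact Subtype.coe_inj

noncomputable def TL (v : Fin l → ℕ) (hd : (Finset.univ.image v).card = d)
    (S : Finset (Fin k)) (hS : S.card = d) : List (Fin k) :=
  (List.finRange l).map (tgtF v hd S hS)

@[simp] lemma TL_length (v : Fin l → ℕ) (hd : (Finset.univ.image v).card = d)
    (S : Finset (Fin k)) (hS : S.card = d) : (TL v hd S hS).length = l := by
  simp [TL]

lemma TL_getElem (v : Fin l → ℕ) (hd : (Finset.univ.image v).card = d)
    (S : Finset (Fin k)) (hS : S.card = d) (i : ℕ) (hi : i < l) :
    (TL v hd S hS)[i]'(by simpa using hi) = tgtF v hd S hS ⟨i, hi⟩ := by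
  simp [TL]

open scoped Classical in
noncomputable def phi (v : Fin l → ℕ) (hd : (Finset.univ.image v).card = d)
    (w : Fin n → Fin k) (S : Finset (Fin k)) (hS : S.card = d) (j : ℕ) : ℕ :=
  Nat.findGreatest (fun t => (TL v hd S hS).take t <+ (List.ofFn w).take j) l

lemma phi_le (v : Fin l → ℕ) (hd : (Finset.univ.image v).card = d)
    (w : Fin n → Fin k) (S : Finset (Fin k)) (hS : S.card = d) (j : ℕ) :
    phi v hd w S hS j ≤ l := Nat.findGreatest_le l

open scoped Classical in
lemma phi_spec (v : Fin l → ℕ) (hd : (Finset.univ.image v).card = d)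
    (w : Fin n → Fin k) (S : Finset (Fin k)) (hS : S.card = d) (j : ℕ) :
    (TL v hd S hS).take (phi v hd w S hS j) <+ (List.ofFn w).take j := by
  unfold phi
  exact Nat.findGreatest_spec
    (P := fun t => (TL v hd S hS).take t <+ (List.ofFn w).take j)
    (Nat.zero_le l) (List.nil_sublist _)

lemma phi_mono (v : Fin l → ℕ) (hd : (Finset.univ.image v).card = d)
    (w : Fin n → Fin k) (S : Finset (Fin k)) (hS : S.card = d) {j j' : ℕ} (h : j ≤ j') :
    phi v hd w S hS j ≤ phi v hd w S hS j' := by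
  have hsub : (List.ofFn w).take j <+ (List.ofFn w).take j' := by
    have : (List.ofFn w).take j = ((List.ofFn w).take j').take j := by
      rw [List.take_take, min_eq_left h]
    rw [this]
    exact List.take_sublist _ _
  unfold phi
  exact Nat.le_findGreatest (phi_le v hd w S hS j) ((phi_spec v hd w S hS j).trans hsub)

lemma phi_succ (v : Fin l → ℕ) (hd : (Finset.univ.image v).card = d)
    (w : Fin n → Fin k) (S : Finset (Fin k)) (hS : S.card = d) {j : ℕ}
    (hphi : phi v hd w S hS j < l) (hj : j < n)
    (hw : w ⟨j, hj⟩ = (TL v hd S hS)[phi v hd w S hS j]'(by simpa using hphi)) :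
    phi v hd w S hS j + 1 ≤ phi v hd w S hS (j + 1) := by
  set t := phi v hd w S hS j with ht
  have h1 : (TL v hd S hS).take (t + 1)
      = (TL v hd S hS).take t ++ [(TL v hd S hS)[t]'(by simpa using hphi)] := by
    rw [List.take_succ, List.getElem?_eq_getElem (by simpa using hphi)]
    rfl
  have h2 : (List.ofFn w).take (j + 1)
      = (List.ofFn w).take j ++ [(List.ofFn w)[j]'(by simpa using hj)] := by
    rw [List.take_succ, List.getElem?_eq_getElem (by simpa using hj)]
    rfl
  have h3 : (TL v hd S hS).take (t + 1) <+ (List.ofFn w).take (j + 1) := by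
    rw [h1, h2]
    refine (phi_spec v hd w S hS j).append ?_
    have : (List.ofFn w)[j]'(by simpa using hj) = w ⟨j, hj⟩ := by
      simp
    rw [this, hw]
  unfold phi
  exact Nat.le_findGreatest hphi h3

lemma phi_lt (v : Fin l → ℕ) (hd : (Finset.univ.image v).card = d)
    (w : Fin n → Fin k) (hv : occCount v w = 0)
    (S : Finset (Fin k)) (hS : S.card = d) (j : ℕ) :
    phi v hd w S hS j < l := by
  rcases lt_or_eq_of_le (phi_le v hd w S hS j) with h | h
  · exact h
  exfalso
  have hsub : TL v hd S hS <+ List.ofFn w := by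
    have h1 := phi_spec v hd w S hS j
    rw [h, List.take_of_length_le (by simp)] at h1
    exact h1.trans (List.take_sublist _ _)
  rw [List.sublist_iff_exists_fin_orderEmbedding_get_eq] at hsub
  obtain ⟨f, hf⟩ := hsub
  have hlen1 : (TL v hd S hS).length = l := by simp
  have hlen2 : (List.ofFn w).length = n := List.length_ofFn
  set F : Fin l → Fin n := fun p =>
    ⟨(f (Fin.cast hlen1.symm p)).val,
      lt_of_lt_of_le (f (Fin.cast hlen1.symm p)).isLt (le_of_eq hlen2)⟩ with hF
  have hwF : ∀ p : Fin l, w (F p) = tgtF v hd S hS p := by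
    intro p
    have h1 := hf (Fin.cast hlen1.symm p)
    simp only [List.get_eq_getElem, Fin.coe_cast, List.getElem_ofFn] at h1
    rw [TL_getElem v hd S hS (p : ℕ) p.isLt] at h1
    simp only [Fin.eta] at h1
    exact (congrArg w (Fin.ext rfl)).trans h1.symm
  have hmono : StrictMono F := by
    intro p q hpq
    have h1 : (Fin.cast hlen1.symm p) < (Fin.cast hlen1.symm q) := by
      rw [Fin.lt_def] at hpq ⊢
      exact hpq
    have h2 := f.strictMono h1
    rw [Fin.lt_def] at h2 ⊢
    exact h2
  have hocc : IsOcc v w F := by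
    refine ⟨hmono, fun p q => ?_⟩
    rw [hwF p, hwF q]
    exact ⟨tgtF_lt_iff v hd S hS p q, tgtF_eq_iff v hd S hS p q⟩
  have : occCount v w ≠ 0 := by
    unfold occCount
    exact Nat.card_ne_zero.2 ⟨⟨⟨F, hocc⟩⟩, inferInstance⟩
  exact this hv

noncomputable def nxtN (v : Fin l → ℕ) (hd : (Finset.univ.image v).card = d)
    (w : Fin n → Fin k) (S : Finset (Fin k)) (hS : S.card = d) (j : ℕ) : ℕ :=
  if h : phi v hd w S hS j < l then
    (((TL v hd S hS)[phi v hd w S hS j]'(by simpa using h) : Fin k) : ℕ)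
  else k

open scoped Classical in
noncomputable def UF (v : Fin l → ℕ) (hd : (Finset.univ.image v).card = d)
    (w : Fin n → Fin k) (j : ℕ) : Finset (Fin k) :=
  Finset.univ.filter
    (fun x => ∀ (S : Finset (Fin k)) (hS : S.card = d), nxtN v hd w S hS j ≠ (x : ℕ))

open scoped Classical in
lemma not_mem_UF (v : Fin l → ℕ) (hd : (Finset.univ.image v).card = d)
    (w : Fin n → Fin k) (j : ℕ) (x : Fin k) (hx : x ∉ UF v hd w j) :
    ∃ (S : Finset (Fin k)) (hS : S.card = d), nxtN v hd w S hS j = (x : ℕ) := by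
  unfold UF at hx
  simp only [Finset.mem_filter, Finset.mem_univ, true_and, not_forall] at hx
  obtain ⟨S, hS, hne⟩ := hx
  exact ⟨S, hS, by simpa using hne⟩

lemma UF_card_le (v : Fin l → ℕ) (hd : (Finset.univ.image v).card = d)
    (w : Fin n → Fin k) (hv : occCount v w = 0) (hd1 : 1 ≤ d) (j : ℕ) :
    (UF v hd w j).card ≤ d - 1 := by
  by_contra hcon
  push_neg at hcon
  have hdle : d ≤ (UF v hd w j).card := by omega
  obtain ⟨S, hSU, hSc⟩ := Finset.exists_subset_card_eq hdle
  have hphi := phi_lt v hd w hv S hSc j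
  set x := (TL v hd S hSc)[phi v hd w S hSc j]'(by simpa using hphi) with hx
  have hxS : x ∈ S := by
    rw [hx, TL_getElem v hd S hSc _ hphi]
    exact tgtF_mem v hd S hSc _
  have hxU : x ∈ UF v hd w j := hSU hxS
  unfold UF at hxU
  simp only [Finset.mem_filter, Finset.mem_univ, true_and] at hxU
  exact hxU S hSc (by rw [nxtN, dif_pos hphi])

noncomputable def FL (v : Fin l → ℕ) (hd : (Finset.univ.image v).card = d)
    (w : Fin n → Fin k) (j : ℕ) : List (Fin k) :=
  ((UF v hd w j).sort (· ≤ ·)) ++ ((Finset.univ \ UF v hd w j).sort (· ≤ ·))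

noncomputable def AL (v : Fin l → ℕ) (hd : (Finset.univ.image v).card = d)
    (w : Fin n → Fin k) (j : ℕ) : List (Fin k) := (FL v hd w j).take (d - 1)

noncomputable def BL (v : Fin l → ℕ) (hd : (Finset.univ.image v).card = d)
    (w : Fin n → Fin k) (j : ℕ) : List (Fin k) := (FL v hd w j).drop (d - 1)

lemma FL_length (v : Fin l → ℕ) (hd : (Finset.univ.image v).card = d)
    (w : Fin n → Fin k) (j : ℕ) : (FL v hd w j).length = k := by
  have h1 : (UF v hd w j).card ≤ k := by
    simpa using Finset.card_le_univ (UF v hd w j)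
  simp [FL, Finset.card_sdiff_of_subset (Finset.subset_univ _)]
  omega

lemma FL_nodup (v : Fin l → ℕ) (hd : (Finset.univ.image v).card = d)
    (w : Fin n → Fin k) (j : ℕ) : (FL v hd w j).Nodup := by
  refine ((UF v hd w j).sort_nodup _).append ((Finset.univ \ UF v hd w j).sort_nodup _) ?_
  intro a ha hb
  rw [Finset.mem_sort] at ha hb
  rw [Finset.mem_sdiff] at hb
  exact hb.2 ha

lemma mem_FL (v : Fin l → ℕ) (hd : (Finset.univ.image v).card = d)
    (w : Fin n → Fin k) (j : ℕ) (x : Fin k) : x ∈ FL v hd w j := by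
  unfold FL
  by_cases hx : x ∈ UF v hd w j
  · exact List.mem_append_left _ ((Finset.mem_sort _).2 hx)
  · exact List.mem_append_right _ ((Finset.mem_sort _).2 (Finset.mem_sdiff.2 ⟨Finset.mem_univ x, hx⟩))

lemma AL_length (v : Fin l → ℕ) (hd : (Finset.univ.image v).card = d)
    (w : Fin n → Fin k) (j : ℕ) (hdk : d - 1 ≤ k) : (AL v hd w j).length = d - 1 := by
  simp [AL, FL_length]
  omega

lemma BL_length (v : Fin l → ℕ) (hd : (Finset.univ.image v).card = d)
    (w : Fin n → Fin k) (j : ℕ) : (BL v hd w j).length = k - (d - 1) := by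
  simp [BL, FL_length]

lemma AL_nodup (v : Fin l → ℕ) (hd : (Finset.univ.image v).card = d)
    (w : Fin n → Fin k) (j : ℕ) : (AL v hd w j).Nodup :=
  (FL_nodup v hd w j).sublist (List.take_sublist _ _)

lemma BL_nodup (v : Fin l → ℕ) (hd : (Finset.univ.image v).card = d)
    (w : Fin n → Fin k) (j : ℕ) : (BL v hd w j).Nodup :=
  (FL_nodup v hd w j).sublist (List.drop_sublist _ _)

lemma mem_AL_or_BL (v : Fin l → ℕ) (hd : (Finset.univ.image v).card = d)
    (w : Fin n → Fin k) (j : ℕ) (x : Fin k) : x ∈ AL v hd w j ∨ x ∈ BL v hd w j := by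
  have := mem_FL v hd w j x
  rw [← List.take_append_drop (d - 1) (FL v hd w j), List.mem_append] at this
  exact this

lemma mem_AL_of_mem_UF (v : Fin l → ℕ) (hd : (Finset.univ.image v).card = d)
    (w : Fin n → Fin k) (j : ℕ) (hcard : (UF v hd w j).card ≤ d - 1)
    {x : Fin k} (hx : x ∈ UF v hd w j) : x ∈ AL v hd w j := by
  have hx' : x ∈ (UF v hd w j).sort (· ≤ ·) := (Finset.mem_sort _).2 hx
  have hlen : ((UF v hd w j).sort (· ≤ ·)).length = (UF v hd w j).card :=
    Finset.length_sort _
  have htake : (FL v hd w j).take ((UF v hd w j).card) = (UF v hd w j).sort (· ≤ ·) := by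
    rw [FL, ← hlen, List.take_left]
  rw [AL]
  have hdd : d - 1 = (UF v hd w j).card + (d - 1 - (UF v hd w j).card) := by omega
  rw [hdd, List.take_add]
  exact List.mem_append_left _ (by rwa [htake])

lemma take_ofFn_congr {w w' : Fin n → Fin k} {j : ℕ}
    (hww : ∀ i : Fin n, (i : ℕ) < j → w i = w' i) :
    (List.ofFn w).take j = (List.ofFn w').take j := by
  apply List.ext_getElem (by simp)
  intro i h1 h2
  have hi : i < j := by
    simp [List.length_take] at h1
    omega
  have hin : i < n := by
    simp [List.length_take] at h1
    omega
  simp only [List.getElem_take, List.getElem_ofFn]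
  exact hww ⟨i, hin⟩ hi

lemma phi_congr (v : Fin l → ℕ) (hd : (Finset.univ.image v).card = d)
    {w w' : Fin n → Fin k} {j : ℕ} (S : Finset (Fin k)) (hS : S.card = d)
    (hww : ∀ i : Fin n, (i : ℕ) < j → w i = w' i) :
    phi v hd w S hS j = phi v hd w' S hS j := by
  unfold phi
  rw [take_ofFn_congr hww]

lemma nxtN_congr (v : Fin l → ℕ) (hd : (Finset.univ.image v).card = d)
    {w w' : Fin n → Fin k} {j : ℕ} (S : Finset (Fin k)) (hS : S.card = d)
    (hww : ∀ i : Fin n, (i : ℕ) < j → w i = w' i) :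
    nxtN v hd w S hS j = nxtN v hd w' S hS j := by
  have hp := phi_congr v hd S hS hww
  unfold nxtN
  exact congrArg
    (fun t : ℕ => if h : t < l then (((TL v hd S hS)[t]'(by simpa using h) : Fin k) : ℕ) else k) hp

lemma UF_congr (v : Fin l → ℕ) (hd : (Finset.univ.image v).card = d)
    {w w' : Fin n → Fin k} {j : ℕ}
    (hww : ∀ i : Fin n, (i : ℕ) < j → w i = w' i) :
    UF v hd w j = UF v hd w' j := by
  unfold UF
  apply Finset.filter_congr
  intro x _
  constructor
  · intro h S hS
    rw [← nxtN_congr v hd S hS hww]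
    exact h S hS
  · intro h S hS
    rw [nxtN_congr v hd S hS hww]
    exact h S hS

lemma AL_congr (v : Fin l → ℕ) (hd : (Finset.univ.image v).card = d)
    {w w' : Fin n → Fin k} {j : ℕ}
    (hww : ∀ i : Fin n, (i : ℕ) < j → w i = w' i) :
    AL v hd w j = AL v hd w' j := by
  unfold AL FL
  rw [UF_congr v hd hww]

lemma BL_congr (v : Fin l → ℕ) (hd : (Finset.univ.image v).card = d)
    {w w' : Fin n → Fin k} {j : ℕ}
    (hww : ∀ i : Fin n, (i : ℕ) < j → w i = w' i) :
    BL v hd w j = BL v hd w' j := by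
  unfold BL FL
  rw [UF_congr v hd hww]

open scoped Classical in
noncomputable def TS (v : Fin l → ℕ) (hd : (Finset.univ.image v).card = d)
    (w : Fin n → Fin k) : Finset (Fin n) :=
  Finset.univ.filter (fun j => w j ∉ AL v hd w (j : ℕ))

open scoped Classical in
noncomputable def code (v : Fin l → ℕ) (hd : (Finset.univ.image v).card = d)
    (w : Fin n → Fin k) : Σ _ : Finset (Fin n), (Fin n → ℕ) :=
  ⟨TS v hd w, fun j =>
    if w j ∈ AL v hd w (j : ℕ) then (AL v hd w (j : ℕ)).idxOf (w j)
    else (BL v hd w (j : ℕ)).idxOf (w j)⟩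

open scoped Classical in
lemma mem_TS_iff (v : Fin l → ℕ) (hd : (Finset.univ.image v).card = d)
    (w : Fin n → Fin k) (j : Fin n) :
    j ∈ TS v hd w ↔ w j ∉ AL v hd w (j : ℕ) := by
  unfold TS
  simp

lemma TS_card_le (v : Fin l → ℕ) (hd : (Finset.univ.image v).card = d)
    (w : Fin n → Fin k) (hv : occCount v w = 0) (hd1 : 1 ≤ d) :
    (TS v hd w).card ≤ l * Nat.choose k d := by
  classical
  have key : ∀ j ∈ TS v hd w,
      ∃ (S : Finset (Fin k)) (hS : S.card = d), nxtN v hd w S hS (j : ℕ) = ((w j : Fin k) : ℕ) := by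
    intro j hj
    rw [mem_TS_iff] at hj
    apply not_mem_UF
    intro hmem
    exact hj (mem_AL_of_mem_UF v hd w (j : ℕ) (UF_card_le v hd w hv hd1 (j : ℕ)) hmem)
  choose Sf hSf hnxt using key
  set g : Fin n → Finset (Fin k) × ℕ := fun j =>
    if h : j ∈ TS v hd w then (Sf j h, phi v hd w (Sf j h) (hSf j h) (j : ℕ)) else (∅, 0)
    with hg
  have hmem : ∀ j ∈ TS v hd w,
      g j ∈ (Finset.powersetCard d (Finset.univ : Finset (Fin k))) ×ˢ Finset.range l := by
    intro j hj
    rw [hg]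
    simp only [dif_pos hj]
    rw [Finset.mem_product]
    constructor
    · rw [Finset.mem_powersetCard_univ]
      exact hSf j hj
    · rw [Finset.mem_range]
      exact phi_lt v hd w hv _ _ _
  have hinj : Set.InjOn g (TS v hd w : Set (Fin n)) := by
    have main : ∀ j1 j2 : Fin n, j1 ∈ TS v hd w → j2 ∈ TS v hd w → j1 < j2 → g j1 ≠ g j2 := by
      intro j1 j2 hj1 hj2 hlt heq
      rw [hg] at heq
      simp only [dif_pos hj1, dif_pos hj2, Prod.mk.injEq] at heq
      obtain ⟨hSeq, hpeq⟩ := heq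
      -- from nxtN at j1: w j1 is the next target letter
      have h1 := hnxt j1 hj1
      have hphi1 : phi v hd w (Sf j1 hj1) (hSf j1 hj1) (j1 : ℕ) < l :=
        phi_lt v hd w hv _ _ _
      rw [nxtN, dif_pos hphi1] at h1
      have hwj1 : w j1 = (TL v hd (Sf j1 hj1) (hSf j1 hj1))[phi v hd w (Sf j1 hj1) (hSf j1 hj1) (j1 : ℕ)]'(by simpa using hphi1) := by
        have := Fin.val_injective h1
        exact this.symm
      have hstep : phi v hd w (Sf j1 hj1) (hSf j1 hj1) (j1 : ℕ) + 1
          ≤ phi v hd w (Sf j1 hj1) (hSf j1 hj1) ((j1 : ℕ) + 1) := by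
        refine phi_succ v hd w _ _ hphi1 j1.isLt ?_
        rw [Fin.eta]
        exact hwj1
      have hmono : phi v hd w (Sf j1 hj1) (hSf j1 hj1) ((j1 : ℕ) + 1)
          ≤ phi v hd w (Sf j1 hj1) (hSf j1 hj1) (j2 : ℕ) :=
        phi_mono v hd w _ _ hlt
      -- phi at j2 for Sf j2 equals phi at j1 for Sf j1 : contradiction
      have hfinal : phi v hd w (Sf j1 hj1) (hSf j1 hj1) (j2 : ℕ)
          = phi v hd w (Sf j2 hj2) (hSf j2 hj2) (j2 : ℕ) := by
        congr 1
      omega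
    intro j1 hj1 j2 hj2 heq
    by_contra hne
    rcases lt_or_gt_of_ne hne with h | h
    · exact main j1 j2 hj1 hj2 h heq
    · exact main j2 j1 hj2 hj1 h heq.symm
  calc (TS v hd w).card
      ≤ ((Finset.powersetCard d (Finset.univ : Finset (Fin k))) ×ˢ Finset.range l).card :=
        Finset.card_le_card_of_injOn g hmem hinj
    _ = l * Nat.choose k d := by
        rw [Finset.card_product, Finset.card_powersetCard, Finset.card_range]
        simp [mul_comm]

lemma indexOf_inj {α : Type*} [DecidableEq α] (L : List α) {x y : α}
    (hx : x ∈ L) (hy : y ∈ L) (h : L.idxOf x = L.idxOf y) : x = y := by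
  have h1 : L[L.idxOf x]'(List.idxOf_lt_length_iff.2 hx) = x := List.getElem_idxOf _
  have h2 : L[L.idxOf y]'(List.idxOf_lt_length_iff.2 hy) = y := List.getElem_idxOf _
  rw [← h1, ← h2]
  congr 1

open scoped Classical in
lemma code_snd_lt (v : Fin l → ℕ) (hd : (Finset.univ.image v).card = d)
    (w : Fin n → Fin k) (hd1 : 1 ≤ d) (hdk : d ≤ k) (j : Fin n) :
    (code v hd w).2 j < (if j ∈ (code v hd w).1 then k - d + 1 else d - 1) := by
  have hALlen := AL_length v hd w (j : ℕ) (by omega)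
  have hBLlen := BL_length v hd w (j : ℕ)
  show (if w j ∈ AL v hd w (j : ℕ) then (AL v hd w (j : ℕ)).idxOf (w j)
      else (BL v hd w (j : ℕ)).idxOf (w j)) < (if j ∈ TS v hd w then k - d + 1 else d - 1)
  by_cases hA : w j ∈ AL v hd w (j : ℕ)
  · rw [if_pos hA, if_neg (by rw [mem_TS_iff]; exact not_not_intro hA)]
    calc (AL v hd w (j : ℕ)).idxOf (w j) < (AL v hd w (j : ℕ)).length :=
          List.idxOf_lt_length_iff.2 hA
      _ = d - 1 := hALlen
  · have hB : w j ∈ BL v hd w (j : ℕ) := (mem_AL_or_BL v hd w (j : ℕ) (w j)).resolve_left hA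
    rw [if_neg hA, if_pos ((mem_TS_iff v hd w j).2 hA)]
    calc (BL v hd w (j : ℕ)).idxOf (w j) < (BL v hd w (j : ℕ)).length :=
          List.idxOf_lt_length_iff.2 hB
      _ = k - (d - 1) := hBLlen
      _ = k - d + 1 := by omega

open scoped Classical in
lemma code_inj (v : Fin l → ℕ) (hd : (Finset.univ.image v).card = d)
    {w w' : Fin n → Fin k} (hv : occCount v w = 0) (hv' : occCount v w' = 0)
    (hc : code v hd w = code v hd w') : w = w' := by
  by_contra hne
  have hex : ∃ j : Fin n, w j ≠ w' j := by
    by_contra h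
    push_neg at h
    exact hne (funext h)
  set D := Finset.univ.filter (fun j : Fin n => w j ≠ w' j) with hD
  have hDne : D.Nonempty := ⟨hex.choose, by simp [hD, hex.choose_spec]⟩
  set j0 := D.min' hDne with hj0def
  have hj0 : w j0 ≠ w' j0 :=
    (Finset.mem_filter.1 (D.min'_mem hDne)).2
  have hpre : ∀ i : Fin n, (i : ℕ) < (j0 : ℕ) → w i = w' i := by
    intro i hi
    by_contra hii
    have hiD : i ∈ D := Finset.mem_filter.2 ⟨Finset.mem_univ i, hii⟩
    have := D.min'_le i hiD
    rw [← hj0def] at this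
    have : (j0 : ℕ) ≤ (i : ℕ) := this
    omega
  have hAL : AL v hd w (j0 : ℕ) = AL v hd w' (j0 : ℕ) := AL_congr v hd hpre
  have hBL : BL v hd w (j0 : ℕ) = BL v hd w' (j0 : ℕ) := BL_congr v hd hpre
  have h1 : TS v hd w = TS v hd w' := congrArg Sigma.fst hc
  have h2 : ∀ j : Fin n, (code v hd w).2 j = (code v hd w').2 j := by
    rw [hc]
    intro j
    rfl
  have h2' := h2 j0
  show False
  by_cases hA : w j0 ∈ AL v hd w (j0 : ℕ)
  · have hA' : w' j0 ∈ AL v hd w' (j0 : ℕ) := by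
      by_contra hA'
      have hin : j0 ∈ TS v hd w' := (mem_TS_iff v hd w' j0).2 hA'
      rw [← h1, mem_TS_iff] at hin
      exact hin hA
    have heq : (AL v hd w (j0 : ℕ)).idxOf (w j0) = (AL v hd w' (j0 : ℕ)).idxOf (w' j0) := by
      have e1 : (code v hd w).2 j0 = (AL v hd w (j0 : ℕ)).idxOf (w j0) := by
        show (if w j0 ∈ AL v hd w (j0 : ℕ) then _ else _) = _
        rw [if_pos hA]
      have e2 : (code v hd w').2 j0 = (AL v hd w' (j0 : ℕ)).idxOf (w' j0) := by
        show (if w' j0 ∈ AL v hd w' (j0 : ℕ) then _ else _) = _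
        rw [if_pos hA']
      rw [← e1, ← e2, h2']
    rw [← hAL] at hA' heq
    exact hj0 (indexOf_inj _ hA hA' heq)
  · have hA' : w' j0 ∉ AL v hd w' (j0 : ℕ) := by
      intro hcon
      have hin : j0 ∈ TS v hd w := (mem_TS_iff v hd w j0).2 hA
      rw [h1, mem_TS_iff] at hin
      exact hin hcon
    have hB : w j0 ∈ BL v hd w (j0 : ℕ) := (mem_AL_or_BL v hd w (j0 : ℕ) (w j0)).resolve_left hA
    have hB' : w' j0 ∈ BL v hd w' (j0 : ℕ) :=
      (mem_AL_or_BL v hd w' (j0 : ℕ) (w' j0)).resolve_left hA'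
    have heq : (BL v hd w (j0 : ℕ)).idxOf (w j0) = (BL v hd w' (j0 : ℕ)).idxOf (w' j0) := by
      have e1 : (code v hd w).2 j0 = (BL v hd w (j0 : ℕ)).idxOf (w j0) := by
        show (if w j0 ∈ AL v hd w (j0 : ℕ) then _ else _) = _
        rw [if_neg hA]
      have e2 : (code v hd w').2 j0 = (BL v hd w' (j0 : ℕ)).idxOf (w' j0) := by
        show (if w' j0 ∈ AL v hd w' (j0 : ℕ) then _ else _) = _
        rw [if_neg hA']
      rw [← e1, ← e2, h2']
    rw [← hBL] at hB' heq
    exact hj0 (indexOf_inj _ hB hB' heq)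

end P1

/-- Upper bound of Theorem 1(a): for a pattern `v` of length `ℓ ≥ 2` with `d ≥ 2`
distinct letters and `k > d`, for every `n > ℓ·C(k,d)` we have
`f_0^v([k]^n) ≤ Σ_{i=0}^{ℓ·C(k,d)} C(n,i)·(k-d+1)^i·(d-1)^{n-i}`. -/
theorem stmt_1 {l : ℕ} (v : Fin l → ℕ) (hl : 2 ≤ l)
    (d : ℕ) (hd : d = (Finset.univ.image v).card) (hd2 : 2 ≤ d)
    (k : ℕ) (hk : d < k)
    (n : ℕ) (hn : l * Nat.choose k d < n) :
    fword v 0 k n ≤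
      ∑ i ∈ Finset.range (l * Nat.choose k d + 1),
        Nat.choose n i * (k - d + 1) ^ i * (d - 1) ^ (n - i) := by
  classical
  have hd' : (Finset.univ.image v).card = d := hd.symm
  have hd1 : 1 ≤ d := by omega
  have hdk : d ≤ k := le_of_lt hk
  set M := l * Nat.choose k d with hM
  have h0 : fword v 0 k n
      = ((Finset.univ : Finset (Fin n → Fin k)).filter (fun w => occCount v w = 0)).card := by
    rw [fword, Nat.card_eq_fintype_card, Fintype.card_subtype]
  set Tgt := (Finset.univ.filter (fun T : Finset (Fin n) => T.card ≤ M)).sigma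
      (fun T => Fintype.piFinset
        (fun j : Fin n => Finset.range (if j ∈ T then k - d + 1 else d - 1))) with hTgt
  have hmem : ∀ w ∈ (Finset.univ : Finset (Fin n → Fin k)).filter (fun w => occCount v w = 0),
      P1.code v hd' w ∈ Tgt := by
    intro w hw
    rw [Finset.mem_filter] at hw
    have hv := hw.2
    rw [hTgt, Finset.mem_sigma]
    constructor
    · rw [Finset.mem_filter]
      exact ⟨Finset.mem_univ _, P1.TS_card_le v hd' w hv hd1⟩
    · rw [Fintype.mem_piFinset]
      intro j
      rw [Finset.mem_range]
      exact P1.code_snd_lt v hd' w hd1 hdk j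
  have hinj : Set.InjOn (P1.code v hd')
      (((Finset.univ : Finset (Fin n → Fin k)).filter (fun w => occCount v w = 0) : Finset (Fin n → Fin k)) : Set (Fin n → Fin k)) := by
    intro w hw w' hw' hww
    rw [Finset.mem_coe, Finset.mem_filter] at hw hw'
    exact P1.code_inj v hd' hw.2 hw'.2 hww
  have hcard : ((Finset.univ : Finset (Fin n → Fin k)).filter
      (fun w => occCount v w = 0)).card ≤ Tgt.card :=
    Finset.card_le_card_of_injOn _ hmem hinj
  have hpi : ∀ T : Finset (Fin n),
      (Fintype.piFinset (fun j : Fin n =>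
        Finset.range (if j ∈ T then k - d + 1 else d - 1))).card
      = (k - d + 1) ^ T.card * (d - 1) ^ (n - T.card) := by
    intro T
    rw [Fintype.card_piFinset]
    simp only [Finset.card_range]
    rw [Finset.prod_ite, Finset.prod_const, Finset.prod_const, Finset.filter_univ_mem]
    congr 2
    rw [Finset.filter_not, Finset.filter_univ_mem, Finset.card_sdiff_of_subset (Finset.subset_univ _)]
    simp
  have hdom : (Finset.univ.filter (fun T : Finset (Fin n) => T.card ≤ M))
      = (Finset.range (M + 1)).biUnion (fun i => Finset.powersetCard i Finset.univ) := by
    ext T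
    simp [Finset.mem_powersetCard_univ, Nat.lt_succ_iff]
  have hdisj : (↑(Finset.range (M + 1)) : Set ℕ).PairwiseDisjoint
      (fun i => Finset.powersetCard i (Finset.univ : Finset (Fin n))) := by
    intro i _ j _ hij
    refine Finset.disjoint_left.2 ?_
    intro T h1 h2
    rw [Finset.mem_powersetCard_univ] at h1 h2
    exact hij (h1.symm.trans h2)
  have hTgtcard : Tgt.card
      = ∑ i ∈ Finset.range (M + 1),
          Nat.choose n i * (k - d + 1) ^ i * (d - 1) ^ (n - i) := by
    rw [hTgt, Finset.card_sigma]
    calc ∑ T ∈ Finset.univ.filter (fun T : Finset (Fin n) => T.card ≤ M),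
          (Fintype.piFinset (fun j : Fin n =>
            Finset.range (if j ∈ T then k - d + 1 else d - 1))).card
        = ∑ T ∈ Finset.univ.filter (fun T : Finset (Fin n) => T.card ≤ M),
          (k - d + 1) ^ T.card * (d - 1) ^ (n - T.card) :=
          Finset.sum_congr rfl (fun T _ => hpi T)
      _ = ∑ i ∈ Finset.range (M + 1), ∑ T ∈ Finset.powersetCard i (Finset.univ : Finset (Fin n)),
            (k - d + 1) ^ T.card * (d - 1) ^ (n - T.card) := by
          rw [hdom, Finset.sum_biUnion hdisj]
      _ = ∑ i ∈ Finset.range (M + 1),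
            Nat.choose n i * (k - d + 1) ^ i * (d - 1) ^ (n - i) := by
          refine Finset.sum_congr rfl (fun i _ => ?_)
          have : ∀ T ∈ Finset.powersetCard i (Finset.univ : Finset (Fin n)),
              (k - d + 1) ^ T.card * (d - 1) ^ (n - T.card)
              = (k - d + 1) ^ i * (d - 1) ^ (n - i) := by
            intro T hT
            rw [Finset.mem_powersetCard_univ] at hT
            rw [hT]
          rw [Finset.sum_congr rfl this, Finset.sum_const, Finset.card_powersetCard,
            Finset.card_univ, Fintype.card_fin, smul_eq_mul, mul_assoc]
  rw [h0, ← hTgtcard]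
  exact hcard
end

section
/- Let v₁ and v₂ be any two patterns. If f_0^{v₁}([k]^n) = f_0^{v₂}([k]^n) for all k ≥ 1 and all n ≥ 1, then f_0^{v₁}(S_n) = f_0^{v₂}(S_n) for all n ≥ 1. (Wilf-equivalence of two patterns in words implies their Wilf-equivalence in permutations.) -/
/-- Number of surjective `i`-ary words of length `n` avoiding `v`. -/
noncomputable def surjCount {l : ℕ} (v : Fin l → ℕ) (i n : ℕ) : ℕ :=
  Nat.card {w : Fin n → Fin i // Function.Surjective w ∧ occCount v w = 0}

lemma occCount_comp {l n i k : ℕ} (v : Fin l → ℕ) (w : Fin n → Fin i)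
    (f : Fin i → Fin k) (hf : StrictMono f) : occCount v (f ∘ w) = occCount v w := by
  unfold occCount
  refine Nat.card_congr (Equiv.subtypeEquivRight fun j => ?_)
  simp [IsOcc, hf.lt_iff_lt, hf.injective.eq_iff]

lemma card_fiber {l n k : ℕ} (v : Fin l → ℕ) (S : Finset (Fin k)) :
    Nat.card {w : Fin n → Fin k // occCount v w = 0 ∧ Finset.image w Finset.univ = S}
      = surjCount v S.card n := by
  classical
  set e := S.orderIsoOfFin rfl with he
  have hmono : StrictMono (fun a : Fin S.card => ((e a : {x // x ∈ S}) : Fin k)) :=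
    fun a b h => e.strictMono h
  have hmem : ∀ (w : Fin n → Fin k), Finset.image w Finset.univ = S → ∀ t, w t ∈ S :=
    fun w hS t => hS ▸ Finset.mem_image_of_mem w (Finset.mem_univ t)
  refine Nat.card_congr ?_
  refine ⟨fun x => ⟨fun t => e.symm ⟨x.1 t, hmem x.1 x.2.2 t⟩, ?_, ?_⟩,
          fun u => ⟨fun t => (e (u.1 t) : Fin k), ?_, ?_⟩, ?_, ?_⟩
  · -- surjectivity
    intro b
    have hb : ((e b : {x // x ∈ S}) : Fin k) ∈ Finset.image x.1 Finset.univ := by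
      rw [x.2.2]; exact (e b).2
    obtain ⟨t, -, ht⟩ := Finset.mem_image.mp hb
    refine ⟨t, ?_⟩
    have h3 : (⟨x.1 t, hmem x.1 x.2.2 t⟩ : {x // x ∈ S}) = e b := Subtype.ext ht
    show e.symm ⟨x.1 t, hmem x.1 x.2.2 t⟩ = b
    rw [h3, OrderIso.symm_apply_apply]
  · -- avoidance
    have hx : x.1 = (fun a : Fin S.card => ((e a : {x // x ∈ S}) : Fin k)) ∘
        (fun t => e.symm ⟨x.1 t, hmem x.1 x.2.2 t⟩) := by
      funext t; simp
    have h2 := occCount_comp v (fun t => e.symm ⟨x.1 t, hmem x.1 x.2.2 t⟩) _ hmono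
    rw [← hx] at h2
    rw [← h2]; exact x.2.1
  · -- avoidance back
    have h2 := occCount_comp v u.1 _ hmono
    rw [show (fun t => ((e (u.1 t) : {x // x ∈ S}) : Fin k))
        = (fun a : Fin S.card => ((e a : {x // x ∈ S}) : Fin k)) ∘ u.1 from rfl]
    rw [h2]; exact u.2.2
  · -- image back
    ext b
    simp only [Finset.mem_image, Finset.mem_univ, true_and]
    constructor
    · rintro ⟨t, rfl⟩; exact (e (u.1 t)).2
    · intro hb
      obtain ⟨t, ht⟩ := u.2.1 (e.symm ⟨b, hb⟩)
      exact ⟨t, by rw [ht, OrderIso.apply_symm_apply]⟩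
  · -- left_inv
    intro x; ext t : 2
    simp
  · -- right_inv
    intro u; ext t : 2
    simp

lemma fword_eq_sum {l : ℕ} (v : Fin l → ℕ) (k n : ℕ) :
    fword v 0 k n = ∑ i ∈ Finset.range (k + 1), k.choose i * surjCount v i n := by
  classical
  have h1 : fword v 0 k n = Nat.card
      (Σ S : Finset (Fin k), {w : Fin n → Fin k // occCount v w = 0 ∧ Finset.image w Finset.univ = S}) := by
    refine (Nat.card_congr ?_).symm
    refine (Equiv.sigmaCongrRight fun S => ?_).trans
      (Equiv.sigmaFiberEquiv (fun a : {w : Fin n → Fin k // occCount v w = 0} => Finset.image a.1 Finset.univ))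
    exact (Equiv.subtypeSubtypeEquivSubtypeInter _ _).symm
  rw [h1]
  rw [Nat.card_eq_fintype_card, Fintype.card_sigma]
  have h2 : ∀ S : Finset (Fin k),
      Fintype.card {w : Fin n → Fin k // occCount v w = 0 ∧ Finset.image w Finset.univ = S}
        = surjCount v S.card n := fun S => by
    rw [← Nat.card_eq_fintype_card]; exact card_fiber v S
  simp_rw [h2]
  rw [show (Finset.univ : Finset (Finset (Fin k))) = (Finset.univ : Finset (Fin k)).powerset from
    Finset.powerset_univ.symm]
  rw [Finset.sum_powerset]
  rw [Finset.card_univ, Fintype.card_fin]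
  refine Finset.sum_congr rfl fun i hi => ?_
  have : ∀ t ∈ Finset.powersetCard i (Finset.univ : Finset (Fin k)),
      surjCount v t.card n = surjCount v i n := fun t ht => by
    rw [(Finset.mem_powersetCard.mp ht).2]
  rw [Finset.sum_congr rfl this, Finset.sum_const, Finset.card_powersetCard, Finset.card_univ,
    Fintype.card_fin, smul_eq_mul]

lemma surj_eq {l₁ l₂ : ℕ} (v₁ : Fin l₁ → ℕ) (v₂ : Fin l₂ → ℕ)
    (h : ∀ k n : ℕ, 1 ≤ k → 1 ≤ n → fword v₁ 0 k n = fword v₂ 0 k n)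
    (n : ℕ) (hn : 1 ≤ n) : ∀ i, surjCount v₁ i n = surjCount v₂ i n := by
  intro i
  induction i using Nat.strong_induction_on with
  | _ i ih =>
    rcases Nat.eq_zero_or_pos i with rfl | hi
    · have hz : ∀ {l : ℕ} (v : Fin l → ℕ), surjCount v 0 n = 0 := by
        intro l v
        have : IsEmpty {w : Fin n → Fin 0 // Function.Surjective w ∧ occCount v w = 0} :=
          ⟨fun x => (x.1 ⟨0, hn⟩).elim0⟩
        exact Nat.card_of_isEmpty
      rw [hz, hz]
    · have key := h i n hi hn
      rw [fword_eq_sum, fword_eq_sum, Finset.sum_range_succ, Finset.sum_range_succ] at key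
      have hlow : ∑ j ∈ Finset.range i, i.choose j * surjCount v₁ j n
          = ∑ j ∈ Finset.range i, i.choose j * surjCount v₂ j n :=
        Finset.sum_congr rfl fun j hj => by rw [ih j (Finset.mem_range.mp hj)]
      rw [hlow] at key
      have := Nat.add_left_cancel key
      simpa [Nat.choose_self] using this

lemma fperm_eq_surjCount {l : ℕ} (v : Fin l → ℕ) (n : ℕ) :
    fperm v 0 n = surjCount v n n := by
  unfold fperm surjCount
  refine Nat.card_congr (Equiv.subtypeEquivRight fun w => ?_)
  rw [Finite.injective_iff_surjective]

/-- Corollary 1: if two patterns `v₁, v₂` are Wilf-equivalent in words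
(`f_0^{v₁}([k]^n) = f_0^{v₂}([k]^n)` for all `k ≥ 1`, `n ≥ 1`), then they are
Wilf-equivalent in permutations (`f_0^{v₁}(S_n) = f_0^{v₂}(S_n)` for all `n ≥ 1`). -/
theorem stmt_6 {l₁ l₂ : ℕ} (v₁ : Fin l₁ → ℕ) (v₂ : Fin l₂ → ℕ)
    (hl₁ : 2 ≤ l₁) (hl₂ : 2 ≤ l₂)
    (h : ∀ k n : ℕ, 1 ≤ k → 1 ≤ n → fword v₁ 0 k n = fword v₂ 0 k n) :
    ∀ n : ℕ, 1 ≤ n → fperm v₁ 0 n = fperm v₂ 0 n := by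
  intro n hn
  rw [fperm_eq_surjCount, fperm_eq_surjCount, surj_eq v₁ v₂ h n hn n]
end

section
/- Let v be a pattern of length ℓ ≥ 2 with d distinct letters, let k ≥ d, and let Φ_k(v) = {u ∈ [k]^ℓ : occ_v(u) = 1}. For each u ∈ Φ_k(v) define the greedy matching state g_u on words over [k] by: g_u(ε) = ε, and g_u(w·i) = g_u(w)·i if the word g_u(w)·i is a prefix of u, and g_u(w·i) = g_u(w) otherwise. Suppose w is a word over [k] such that g_u(w) ≠ u for every u ∈ Φ_k(v) (no instance is fully matched). Then the set of extending letters L(w) = {i ∈ [k] : ∃ u ∈ Φ_k(v) such that g_u(w)·i is a prefix of u} has cardinality at least k - d + 1. -/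
/-- One step of the greedy matching of an instance `u`: append the letter `i` to the
current matched prefix `s` if the result is still a prefix of `u`, otherwise keep `s`. -/
def greedyStep {k : ℕ} (u : List (Fin k)) (s : List (Fin k)) (i : Fin k) : List (Fin k) :=
  if (s ++ [i]) <+: u then s ++ [i] else s

/-- The greedy matching state `g_u(w)`: process the letters of `w` from left to right,
greedily extending the matched prefix of `u`. -/
def greedy {k : ℕ} (u : List (Fin k)) (w : List (Fin k)) : List (Fin k) :=
  w.foldl (greedyStep u) []

/-- The greedy state is always a prefix of `u`. -/
lemma greedy_aux_prefix {k : ℕ} (u : List (Fin k)) :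
    ∀ (w s : List (Fin k)), s <+: u → w.foldl (greedyStep u) s <+: u := by
  intro w
  induction w with
  | nil => intro s hs; simpa using hs
  | cons i w ih =>
    intro s hs
    simp only [List.foldl_cons]
    apply ih
    unfold greedyStep
    split
    · assumption
    · exact hs

lemma greedy_prefix {k : ℕ} (u w : List (Fin k)) : greedy u w <+: u :=
  greedy_aux_prefix u w [] ⟨u, by simp⟩

/-- A proper prefix can be extended by a letter of `u`. -/
lemma exists_extend {k : ℕ} {u s : List (Fin k)} (hs : s <+: u) (hne : s ≠ u) :
    ∃ i ∈ u, (s ++ [i]) <+: u := by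
  obtain ⟨t, rfl⟩ := hs
  cases t with
  | nil => simp at hne
  | cons i t' =>
    refine ⟨i, by simp, t', by simp⟩

/-- Any strictly monotone map `Fin l → Fin l` is the identity. -/
lemma strictMono_fin_eq_id {l : ℕ} {j : Fin l → Fin l} (hj : StrictMono j) : j = id := by
  have hsurj : Function.Surjective j :=
    Finite.injective_iff_surjective.mp hj.injective
  have : Set.range j = Set.range (id : Fin l → Fin l) := by
    rw [Set.range_id, Set.range_eq_univ]
    exact hsurj
  haveI hwf : WellFoundedLT (Fin l) := inferInstance
  exact (@StrictMono.range_inj (Fin l) (Fin l) _ _ hwf j id hj strictMono_id).1 this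

/-- Lemma 2: for a pattern `v` of length `ℓ ≥ 2` with `d` distinct letters and
`k ≥ d`, if a word `w` over `[k]` fully matches no instance `u ∈ Φ_k(v)`, then the set
of letters extending the greedy state of at least one instance has at least
`k - d + 1` elements. -/
theorem stmt_10 {l : ℕ} (v : Fin l → ℕ) (hl : 2 ≤ l)
    (d : ℕ) (hd : d = (Finset.univ.image v).card)
    (k : ℕ) (hk : d ≤ k)
    (w : List (Fin k))
    (hw : ∀ u : Fin l → Fin k, occCount v u = 1 → greedy (List.ofFn u) w ≠ List.ofFn u) :
    k - d + 1 ≤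
      Set.ncard {i : Fin k | ∃ u : Fin l → Fin k, occCount v u = 1 ∧
        (greedy (List.ofFn u) w ++ [i]) <+: List.ofFn u} := by
  classical
  set L : Set (Fin k) := {i : Fin k | ∃ u : Fin l → Fin k, occCount v u = 1 ∧
      (greedy (List.ofFn u) w ++ [i]) <+: List.ofFn u} with hL
  set D : Finset ℕ := Finset.univ.image v with hDdef
  have hl0 : 0 < l := by omega
  have : Nonempty (Fin l) := ⟨⟨0, hl0⟩⟩
  have hd1 : 1 ≤ d := by
    rw [hd]
    exact Finset.card_pos.2 ⟨v ⟨0, hl0⟩, Finset.mem_image_of_mem v (Finset.mem_univ _)⟩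
  -- For every d-subset T of Fin k, some letter of T lies in L.
  have key : ∀ T : Finset (Fin k), T.card = d → ∃ i ∈ T, i ∈ L := by
    intro T hT
    have hD : D.card = d := hd.symm
    let eD : Fin d ≃o D := D.orderIsoOfFin hD
    let eT : Fin d ≃o T := T.orderIsoOfFin hT
    have hvmem : ∀ p : Fin l, v p ∈ D := fun p =>
      Finset.mem_image_of_mem v (Finset.mem_univ p)
    let u : Fin l → Fin k := fun p => (eT (eD.symm ⟨v p, hvmem p⟩) : Fin k)
    have hiso : ∀ p q : Fin l, (u p < u q ↔ v p < v q) ∧ (u p = u q ↔ v p = v q) := by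
      intro p q
      constructor
      · show ((eT (eD.symm ⟨v p, hvmem p⟩) : Fin k) < (eT (eD.symm ⟨v q, hvmem q⟩) : Fin k)) ↔ _
        exact Subtype.coe_lt_coe.trans ((eT.lt_iff_lt).trans
          ((eD.symm.lt_iff_lt).trans Subtype.mk_lt_mk))
      · constructor
        · intro h
          have h1 : eT (eD.symm ⟨v p, hvmem p⟩) = eT (eD.symm ⟨v q, hvmem q⟩) :=
            Subtype.ext h
          have h2 := eD.symm.injective (eT.injective h1)
          exact congrArg Subtype.val h2
        · intro h
          have : (⟨v p, hvmem p⟩ : D) = ⟨v q, hvmem q⟩ := Subtype.ext h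
          rw [show u p = (eT (eD.symm ⟨v p, hvmem p⟩) : Fin k) from rfl, this]
    have humem : ∀ p : Fin l, u p ∈ T := fun p => (eT (eD.symm ⟨v p, hvmem p⟩)).2
    have hocc : occCount v u = 1 := by
      rw [occCount, Nat.card_eq_one_iff_unique]
      constructor
      · constructor
        intro a b
        apply Subtype.ext
        rw [strictMono_fin_eq_id a.2.1, strictMono_fin_eq_id b.2.1]
      · exact ⟨⟨id, strictMono_id, fun p q => hiso p q⟩⟩
    obtain ⟨i, hiu, hpre⟩ :=
      exists_extend (greedy_prefix (List.ofFn u) w) (hw u hocc)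
    obtain ⟨p, rfl⟩ := List.mem_ofFn.1 hiu
    exact ⟨u p, humem p, u, hocc, hpre⟩
  -- Counting.
  have hcompl : (Finset.univ.filter (fun i : Fin k => i ∉ L)).card < d := by
    by_contra h
    push_neg at h
    obtain ⟨T, hsub, hTcard⟩ := Finset.exists_subset_card_eq h
    obtain ⟨i, hiT, hiL⟩ := key T hTcard
    exact (Finset.mem_filter.1 (hsub hiT)).2 hiL
  have hsum : (Finset.univ.filter (fun i : Fin k => i ∈ L)).card +
      (Finset.univ.filter (fun i : Fin k => i ∉ L)).card = k := by
    rw [Finset.card_filter_add_card_filter_not]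
    simp
  have hncard : L.ncard = (Finset.univ.filter (fun i : Fin k => i ∈ L)).card := by
    rw [Set.ncard_eq_toFinset_card']
    congr 1
    ext i
    simp [Set.mem_toFinset]
  omega
end

section
/- Let v be any pattern. For all integers n ≥ i ≥ 1, the number of words of length n whose set of distinct letters is exactly [i] and which avoid v satisfies f_0^v(Y_n([i])) ≤ C(n,i)·f_0^v([i]^{n-i})·f_0^v(S_i). -/
/-- `fwordY v r j n` is the number of words of length `n` over `[j]` whose set of
distinct letters is exactly `[j]` (i.e. surjective words) with exactly `r`
occurrences of the pattern `v`. -/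
noncomputable def fwordY {l : ℕ} (v : Fin l → ℕ) (r j n : ℕ) : ℕ :=
  Nat.card {w : Fin n → Fin j // Function.Surjective w ∧ occCount v w = r}

/-- Avoidance is inherited by subwords. -/
lemma occ_comp_zero {l n m k : ℕ} (v : Fin l → ℕ) (w : Fin n → Fin k) (g : Fin m → Fin n)
    (hg : StrictMono g) (hw : occCount v w = 0) : occCount v (w ∘ g) = 0 := by
  rw [occCount, Nat.card_eq_zero] at hw ⊢
  left
  rcases hw with h | h
  · constructor
    rintro ⟨j, hj⟩
    exact h.false ⟨g ∘ j, hg.comp hj.1, fun p q => hj.2 p q⟩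
  · exact (not_finite {j : Fin l → Fin n // IsOcc v w j}).elim

lemma embCongr {α : Type*} [LinearOrder α] {s t : Finset α} {k : ℕ} (h : s = t)
    (hs : s.card = k) (ht : t.card = k) :
    ⇑(s.orderEmbOfFin hs) = ⇑(t.orderEmbOfFin ht) := by subst h; rfl

/-- For any pattern `v` and all `n ≥ i ≥ 1`:
`f_0^v(Y_n([i])) ≤ C(n,i)·f_0^v([i]^{n-i})·f_0^v(S_i)`. -/
theorem stmt_15 {l : ℕ} (v : Fin l → ℕ) (hl : 2 ≤ l)
    (i n : ℕ) (hi : 1 ≤ i) (hn : i ≤ n) :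
    fwordY v 0 i n ≤ Nat.choose n i * fword v 0 i (n - i) * fperm v 0 i := by
  classical
  -- the first-occurrence position of each letter
  have hfilter : ∀ (w : Fin n → Fin i), Function.Surjective w → ∀ a : Fin i,
      (Finset.univ.filter (fun j => w j = a)).Nonempty := by
    intro w hs a
    obtain ⟨j, hj⟩ := hs a
    exact ⟨j, by simp [hj]⟩
  set fp : {w : Fin n → Fin i // Function.Surjective w ∧ occCount v w = 0} → Fin i → Fin n :=
    fun w a => (Finset.univ.filter (fun j => w.1 j = a)).min' (hfilter w.1 w.2.1 a) with hfp
  have hfpval : ∀ (w : {w : Fin n → Fin i // Function.Surjective w ∧ occCount v w = 0})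
      (a : Fin i), w.1 (fp w a) = a := by
    intro w a
    have := Finset.min'_mem (Finset.univ.filter (fun j => w.1 j = a)) (hfilter w.1 w.2.1 a)
    simpa using this
  have hfpinj : ∀ (w : {w : Fin n → Fin i // Function.Surjective w ∧ occCount v w = 0}),
      Function.Injective (fp w) := by
    intro w a b hab
    have := hfpval w a
    rw [hab, hfpval w b] at this
    exact this.symm
  set S : {w : Fin n → Fin i // Function.Surjective w ∧ occCount v w = 0} → Finset (Fin n) :=
    fun w => Finset.image (fp w) Finset.univ with hS
  have hScard : ∀ w, (S w).card = i := by
    intro w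
    rw [hS]
    rw [Finset.card_image_of_injective _ (hfpinj w), Finset.card_univ, Fintype.card_fin]
  have hSccard : ∀ w, (S w)ᶜ.card = n - i := by
    intro w
    rw [Finset.card_compl, hScard, Fintype.card_fin]
  -- the injection
  set F : {w : Fin n → Fin i // Function.Surjective w ∧ occCount v w = 0} →
      ({s : Finset (Fin n) // s.card = i} ×
       {u : Fin (n - i) → Fin i // occCount v u = 0} ×
       {u : Fin i → Fin i // Function.Injective u ∧ occCount v u = 0}) :=
    fun w => ⟨⟨S w, hScard w⟩,
      ⟨w.1 ∘ ((S w)ᶜ.orderEmbOfFin (hSccard w)),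
        occ_comp_zero v w.1 _ ((S w)ᶜ.orderEmbOfFin (hSccard w)).strictMono w.2.2⟩,
      ⟨w.1 ∘ ((S w).orderEmbOfFin (hScard w)),
        by
          intro a b hab
          have ha : (S w).orderEmbOfFin (hScard w) a ∈ S w := Finset.orderEmbOfFin_mem _ _ _
          have hb : (S w).orderEmbOfFin (hScard w) b ∈ S w := Finset.orderEmbOfFin_mem _ _ _
          obtain ⟨x, -, hx⟩ := Finset.mem_image.mp ha
          obtain ⟨y, -, hy⟩ := Finset.mem_image.mp hb
          have hxv : w.1 ((S w).orderEmbOfFin (hScard w) a) = x := by rw [← hx]; exact hfpval w x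
          have hyv : w.1 ((S w).orderEmbOfFin (hScard w) b) = y := by rw [← hy]; exact hfpval w y
          have : x = y := by rw [← hxv, ← hyv]; exact hab
          subst this
          exact ((S w).orderEmbOfFin (hScard w)).injective (by rw [← hx, ← hy]),
        occ_comp_zero v w.1 _ ((S w).orderEmbOfFin (hScard w)).strictMono w.2.2⟩⟩
    with hF
  have hFinj : Function.Injective F := by
    intro w w' h
    rw [hF] at h
    simp only [Prod.mk.injEq, Subtype.mk.injEq] at h
    obtain ⟨h1, h2, h3⟩ := h
    apply Subtype.ext
    funext j
    by_cases hj : j ∈ S w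
    · -- j is in the range of the order embedding of S w
      have : j ∈ Set.range ((S w).orderEmbOfFin (hScard w)) := by
        rw [Finset.range_orderEmbOfFin]; exact hj
      obtain ⟨a, ha⟩ := this
      have e1 : w.1 j = (w.1 ∘ ((S w).orderEmbOfFin (hScard w))) a := by
        simp [ha]
      have e2 : (w'.1 ∘ ((S w').orderEmbOfFin (hScard w'))) a = w'.1 j := by
        simp only [Function.comp_apply]
        rw [← congrFun (embCongr h1 (hScard w) (hScard w')) a, ha]
      rw [e1, h3, e2]
    · have hj' : j ∈ (S w)ᶜ := Finset.mem_compl.mpr hj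
      have : j ∈ Set.range ((S w)ᶜ.orderEmbOfFin (hSccard w)) := by
        rw [Finset.range_orderEmbOfFin]; exact hj'
      obtain ⟨a, ha⟩ := this
      have e1 : w.1 j = (w.1 ∘ ((S w)ᶜ.orderEmbOfFin (hSccard w))) a := by
        simp [ha]
      have e2 : (w'.1 ∘ ((S w')ᶜ.orderEmbOfFin (hSccard w'))) a = w'.1 j := by
        simp only [Function.comp_apply]
        rw [← congrFun (embCongr (congrArg compl h1) (hSccard w) (hSccard w')) a, ha]
      rw [e1, h2, e2]
  have hle := Nat.card_le_card_of_injective F hFinj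
  rw [fwordY]
  refine hle.trans_eq ?_
  rw [Nat.card_prod, Nat.card_prod]
  rw [Nat.card_eq_fintype_card (α := {s : Finset (Fin n) // s.card = i}),
    Fintype.card_finset_len, Fintype.card_fin]
  rw [fword, fperm, mul_assoc]
end

section
/- Let v be any pattern. For every integer n ≥ 1, the number of n-ary words of length n avoiding v satisfies f_0^v([n]^n) ≤ Σ_{i=1}^{n} C(n,i)²·f_0^v([i]^{n-i})·f_0^v(S_i). -/
open Finset
open scoped Classical

lemma occCount_eq_zero_iff {l n k : ℕ} (v : Fin l → ℕ) (w : Fin n → Fin k) :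
    occCount v w = 0 ↔ ∀ j, ¬ IsOcc v w j := by
  unfold occCount
  rw [Nat.card_eq_zero]
  constructor
  · rintro (h | h) j hj
    · exact (h.false ⟨j, hj⟩).elim
    · exact absurd h (not_infinite_iff_finite.mpr inferInstance)
  · intro h
    exact Or.inl ⟨fun x => h x.1 x.2⟩

lemma occCount_transfer {l n k m i : ℕ} (v : Fin l → ℕ) {w : Fin n → Fin k}
    (hw : occCount v w = 0) {g : Fin m → Fin n} (hg : StrictMono g) {q : Fin m → Fin i}
    (hq : ∀ a b, (q a < q b ↔ w (g a) < w (g b)) ∧ (q a = q b ↔ w (g a) = w (g b))) :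
    occCount v q = 0 := by
  rw [occCount_eq_zero_iff] at hw ⊢
  rintro j ⟨hmono, hiso⟩
  refine hw (g ∘ j) ⟨hg.comp hmono, fun p r => ?_⟩
  have h1 := hiso p r
  have h2 := hq (j p) (j r)
  exact ⟨h2.1.symm.trans h1.1, h2.2.symm.trans h1.2⟩

noncomputable def firstOcc {n : ℕ} (w : Fin n → Fin n) : Finset (Fin n) :=
  Finset.univ.filter (fun t => ∀ s, s < t → w s ≠ w t)

lemma mem_firstOcc {n : ℕ} {w : Fin n → Fin n} {t : Fin n} :
    t ∈ firstOcc w ↔ ∀ s, s < t → w s ≠ w t := by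
  simp [firstOcc]

lemma injOn_firstOcc {n : ℕ} (w : Fin n → Fin n) : Set.InjOn w (firstOcc w) := by
  intro a ha b hb hab
  rcases lt_trichotomy a b with h | h | h
  · exact absurd hab (mem_firstOcc.mp hb a h)
  · exact h
  · exact absurd hab.symm (mem_firstOcc.mp ha b h)

lemma image_firstOcc {n : ℕ} (w : Fin n → Fin n) :
    (firstOcc w).image w = Finset.univ.image w := by
  apply Finset.Subset.antisymm
  · exact Finset.image_subset_image (Finset.subset_univ _)
  · intro x hx
    rw [Finset.mem_image] at hx
    obtain ⟨t, -, ht⟩ := hx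
    have hne : (Finset.univ.filter (fun s => w s = x)).Nonempty := ⟨t, by simp [ht]⟩
    set s := (Finset.univ.filter (fun s => w s = x)).min' hne with hs
    have hsmem : w s = x := (Finset.mem_filter.mp ((Finset.univ.filter (fun s => w s = x)).min'_mem hne)).2
    rw [Finset.mem_image]
    refine ⟨s, mem_firstOcc.mpr ?_, hsmem⟩
    intro r hr hre
    have : s ≤ r := Finset.min'_le _ r (by simp [hre.trans hsmem])
    exact absurd hr (not_lt.mpr this)

lemma card_firstOcc {n : ℕ} (w : Fin n → Fin n) :
    (firstOcc w).card = (Finset.univ.image w).card := by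
  rw [← image_firstOcc, Finset.card_image_of_injOn (injOn_firstOcc w)]

lemma card_firstOcc' {n i : ℕ} (w : Fin n → Fin n) (h : (Finset.univ.image w).card = i) :
    (firstOcc w).card = i := (card_firstOcc w).trans h

lemma card_firstOcc_compl {n i : ℕ} (w : Fin n → Fin n) (h : (Finset.univ.image w).card = i) :
    ((firstOcc w)ᶜ).card = n - i := by
  rw [Finset.card_compl, card_firstOcc' w h, Fintype.card_fin]

noncomputable def permOf {n i : ℕ} (w : Fin n → Fin n) (h : (Finset.univ.image w).card = i) :
    Fin i → Fin i := fun a =>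
  ((Finset.univ.image w).orderIsoOfFin h).symm
    ⟨w ((firstOcc w).orderIsoOfFin (card_firstOcc' w h) a),
      Finset.mem_image_of_mem _ (Finset.mem_univ _)⟩

noncomputable def wordOf {n i : ℕ} (w : Fin n → Fin n) (h : (Finset.univ.image w).card = i) :
    Fin (n - i) → Fin i := fun a =>
  ((Finset.univ.image w).orderIsoOfFin h).symm
    ⟨w (((firstOcc w)ᶜ).orderIsoOfFin (card_firstOcc_compl w h) a),
      Finset.mem_image_of_mem _ (Finset.mem_univ _)⟩

noncomputable def decode {n i : ℕ} (S P : Finset (Fin n)) (hS : S.card = i) (hP : P.card = i)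
    (u : Fin (n - i) → Fin i) (p : Fin i → Fin i) : Fin n → Fin n := fun t =>
  if ht : t ∈ P then ↑(S.orderIsoOfFin hS (p ((P.orderIsoOfFin hP).symm ⟨t, ht⟩)))
  else ↑(S.orderIsoOfFin hS (u ((Pᶜ.orderIsoOfFin
    (by rw [Finset.card_compl, hP, Fintype.card_fin])).symm ⟨t, by simpa using ht⟩)))

lemma decode_spec {n i : ℕ} (w : Fin n → Fin n) (h : (Finset.univ.image w).card = i) :
    decode (Finset.univ.image w) (firstOcc w) h (card_firstOcc' w h)
      (wordOf w h) (permOf w h) = w := by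
  funext t
  by_cases ht : t ∈ firstOcc w
  · rw [decode, dif_pos ht, permOf]
    simp
  · rw [decode, dif_neg ht, wordOf]
    simp

lemma permOf_injective {n i : ℕ} (w : Fin n → Fin n) (h : (Finset.univ.image w).card = i) :
    Function.Injective (permOf w h) := by
  intro a b hab
  unfold permOf at hab
  have h2 := congrArg ((Finset.univ.image w).orderIsoOfFin h) hab
  simp only [OrderIso.apply_symm_apply] at h2
  have h3 : w ((firstOcc w).orderIsoOfFin (card_firstOcc' w h) a) =
      w ((firstOcc w).orderIsoOfFin (card_firstOcc' w h) b) := by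
    exact congrArg Subtype.val h2
  have h4 := injOn_firstOcc w
    (((firstOcc w).orderIsoOfFin (card_firstOcc' w h) a).2)
    (((firstOcc w).orderIsoOfFin (card_firstOcc' w h) b).2) h3
  exact ((firstOcc w).orderIsoOfFin (card_firstOcc' w h)).injective (Subtype.ext h4)

lemma occCount_permOf {l n i : ℕ} (v : Fin l → ℕ) (w : Fin n → Fin n)
    (hw : occCount v w = 0) (h : (Finset.univ.image w).card = i) :
    occCount v (permOf w h) = 0 := by
  refine occCount_transfer v hw (g := fun a => ((firstOcc w).orderIsoOfFin (card_firstOcc' w h) a : Fin n)) (fun a b hab => ?_) (fun a b => ?_)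
  · exact Subtype.coe_lt_coe.mpr (((firstOcc w).orderIsoOfFin (card_firstOcc' w h)).strictMono hab)
  · unfold permOf
    constructor
    · rw [OrderIso.lt_iff_lt]
      exact Subtype.mk_lt_mk
    · rw [EmbeddingLike.apply_eq_iff_eq]
      exact Subtype.mk_eq_mk

lemma occCount_wordOf {l n i : ℕ} (v : Fin l → ℕ) (w : Fin n → Fin n)
    (hw : occCount v w = 0) (h : (Finset.univ.image w).card = i) :
    occCount v (wordOf w h) = 0 := by
  refine occCount_transfer v hw (g := fun a => (((firstOcc w)ᶜ).orderIsoOfFin (card_firstOcc_compl w h) a : Fin n)) (fun a b hab => ?_) (fun a b => ?_)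
  · exact Subtype.coe_lt_coe.mpr ((((firstOcc w)ᶜ).orderIsoOfFin (card_firstOcc_compl w h)).strictMono hab)
  · unfold wordOf
    constructor
    · rw [OrderIso.lt_iff_lt]
      exact Subtype.mk_lt_mk
    · rw [EmbeddingLike.apply_eq_iff_eq]
      exact Subtype.mk_eq_mk

lemma key {l : ℕ} (v : Fin l → ℕ) {n i : ℕ} :
    Nat.card {w : Fin n → Fin n // occCount v w = 0 ∧ (Finset.univ.image w).card = i} ≤
      n.choose i ^ 2 * fword v 0 i (n - i) * fperm v 0 i := by
  classical
  let T := ({S : Finset (Fin n) // S.card = i} × {P : Finset (Fin n) // P.card = i} ×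
    {u : Fin (n - i) → Fin i // occCount v u = 0} ×
    {p : Fin i → Fin i // Function.Injective p ∧ occCount v p = 0})
  let Φ : {w : Fin n → Fin n // occCount v w = 0 ∧ (Finset.univ.image w).card = i} → T :=
    fun x => (⟨Finset.univ.image x.1, x.2.2⟩, ⟨firstOcc x.1, card_firstOcc' x.1 x.2.2⟩,
      ⟨wordOf x.1 x.2.2, occCount_wordOf v x.1 x.2.1 x.2.2⟩,
      ⟨permOf x.1 x.2.2, ⟨permOf_injective x.1 x.2.2, occCount_permOf v x.1 x.2.1 x.2.2⟩⟩)
  let D : T → (Fin n → Fin n) :=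
    fun z => decode z.1.1 z.2.1.1 z.1.2 z.2.1.2 z.2.2.1.1 z.2.2.2.1
  have hΦ : Function.Injective Φ := by
    intro x y hxy
    have hD : D (Φ x) = D (Φ y) := congrArg D hxy
    exact Subtype.ext ((decode_spec x.1 x.2.2).symm.trans
      (hD.trans (decode_spec y.1 y.2.2)))
  have h1 : Nat.card {w : Fin n → Fin n // occCount v w = 0 ∧ (Finset.univ.image w).card = i}
      ≤ Nat.card T := Nat.card_le_card_of_injective Φ hΦ
  have hT : Nat.card T =
      n.choose i * (n.choose i * (fword v 0 i (n - i) * fperm v 0 i)) := by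
    show Nat.card (_ × _ × _ × _) = _
    rw [Nat.card_prod, Nat.card_prod, Nat.card_prod]
    congr 1
    · rw [Nat.card_eq_fintype_card, Fintype.card_finset_len, Fintype.card_fin]
    congr 1
    · rw [Nat.card_eq_fintype_card, Fintype.card_finset_len, Fintype.card_fin]
  calc Nat.card {w : Fin n → Fin n // occCount v w = 0 ∧ (Finset.univ.image w).card = i}
      ≤ Nat.card T := h1
    _ = n.choose i ^ 2 * fword v 0 i (n - i) * fperm v 0 i := by rw [hT]; ring

/-- Inequality (10): for any pattern `v` and every `n ≥ 1`:
`f_0^v([n]^n) ≤ Σ_{i=1}^{n} C(n,i)²·f_0^v([i]^{n-i})·f_0^v(S_i)`. -/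
theorem stmt_16 {l : ℕ} (v : Fin l → ℕ) (hl : 2 ≤ l) (n : ℕ) (hn : 1 ≤ n) :
    fword v 0 n n ≤
      ∑ i ∈ Finset.Icc 1 n,
        Nat.choose n i ^ 2 * fword v 0 i (n - i) * fperm v 0 i := by
  classical
  have e1 : fword v 0 n n =
      (Finset.univ.filter (fun w : Fin n → Fin n => occCount v w = 0)).card := by
    rw [fword, Nat.card_eq_fintype_card, Fintype.card_subtype]
  rw [e1, Finset.card_eq_sum_card_fiberwise
    (f := fun w : Fin n → Fin n => (Finset.univ.image w).card) (t := Finset.Icc 1 n)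
    (fun w _ => by
      rw [Finset.mem_coe, Finset.mem_Icc]
      constructor
      · have : Nonempty (Fin n) := ⟨⟨0, hn⟩⟩
        exact Finset.card_pos.mpr (Finset.univ_nonempty.image w)
      · exact le_trans (Finset.card_le_univ _) (by simp))]
  apply Finset.sum_le_sum
  intro i _
  have e2 : (Finset.filter (fun w => (Finset.univ.image w).card = i)
      (Finset.univ.filter (fun w : Fin n → Fin n => occCount v w = 0))).card =
      Nat.card {w : Fin n → Fin n // occCount v w = 0 ∧ (Finset.univ.image w).card = i} := by
    rw [Finset.filter_filter, Nat.card_eq_fintype_card, Fintype.card_subtype]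
  rw [e2]
  exact key v
end

section
/- Let v be a pattern of length ℓ, and fix integers k ≥ 1, n ≥ 1, r ≥ 1 and s with 0 ≤ s ≤ n. Let f_{r,s}^v([k]^n) denote the number of words w ∈ [k]^n with occ_v(w) = r whose occurrence index set (the union of the index sets of all occurrences of v in w) has cardinality exactly s. Then f_{r,s}^v([k]^n) ≤ k^s·C(n,s)·f_0^v([k]^{n-s}). -/
/-- The occurrence index set of `w`: the union over all occurrences of `v` in `w`
of the corresponding sets of indices. -/
def occIndexSet {l n k : ℕ} (v : Fin l → ℕ) (w : Fin n → Fin k) : Set (Fin n) :=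
  {j | ∃ js : Fin l → Fin n, IsOcc v w js ∧ ∃ p : Fin l, js p = j}

/-- `fwordOccSub v r s k n` is the number of words `w ∈ [k]^n` with exactly `r`
occurrences of `v` whose occurrence index set has cardinality exactly `s`. -/
noncomputable def fwordOccSub {l : ℕ} (v : Fin l → ℕ) (r s k n : ℕ) : ℕ :=
  Nat.card {w : Fin n → Fin k // occCount v w = r ∧ (occIndexSet v w).ncard = s}


lemma isOcc_comp {l m n k : ℕ} (v : Fin l → ℕ) (w : Fin n → Fin k) (e : Fin m ↪o Fin n)
    (j : Fin l → Fin m) (h : IsOcc v (w ∘ e) j) : IsOcc v w (e ∘ j) :=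
  ⟨e.strictMono.comp h.1, fun p q => h.2 p q⟩

lemma orderEmbOfFin_congr {α : Type*} [LinearOrder α] {S S' : Finset α} (h : S = S')
    {m : ℕ} (hS : S.card = m) (hS' : S'.card = m) (t : Fin m) :
    S.orderEmbOfFin hS t = S'.orderEmbOfFin hS' t := by subst h; rfl

/-- Inequality (8), upper bound: `f_{r,s}^v([k]^n) ≤ k^s·C(n,s)·f_0^v([k]^{n-s})`. -/
theorem stmt_18 {l : ℕ} (v : Fin l → ℕ) (hl : 2 ≤ l)
    (k n r s : ℕ) (hk : 1 ≤ k) (hn : 1 ≤ n) (hr : 1 ≤ r) (hs : s ≤ n) :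
    fwordOccSub v r s k n ≤ k ^ s * Nat.choose n s * fword v 0 k (n - s) := by
  classical
  set T := {w : Fin n → Fin k // occCount v w = r ∧ (occIndexSet v w).ncard = s} with hT
  set B := ({S : Finset (Fin n) // S.card = s} ×
      ((Fin s → Fin k) × {u : Fin (n - s) → Fin k // occCount v u = 0})) with hB
  have hcard : ∀ w : T, ((Set.toFinite (occIndexSet v w.1)).toFinset).card = s := by
    intro w
    rw [← Set.ncard_eq_toFinset_card (occIndexSet v w.1) (Set.toFinite _)]
    exact w.2.2
  have hccard : ∀ w : T, ((Set.toFinite (occIndexSet v w.1)).toFinsetᶜ).card = n - s := by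
    intro w
    rw [Finset.card_compl, hcard w, Fintype.card_fin]
  have havoid : ∀ w : T,
      occCount v (w.1 ∘ (((Set.toFinite (occIndexSet v w.1)).toFinsetᶜ).orderEmbOfFin (hccard w))) = 0 := by
    intro w
    have : IsEmpty {j : Fin l → Fin (n - s) //
        IsOcc v (w.1 ∘ (((Set.toFinite (occIndexSet v w.1)).toFinsetᶜ).orderEmbOfFin (hccard w))) j} := by
      constructor
      rintro ⟨j, hj⟩
      have h0 : (0 : ℕ) < l := by omega
      have hocc := isOcc_comp v w.1 _ j hj
      have hmem : (((Set.toFinite (occIndexSet v w.1)).toFinsetᶜ).orderEmbOfFin (hccard w)) (j ⟨0, h0⟩)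
          ∈ occIndexSet v w.1 := ⟨_, hocc, ⟨0, h0⟩, rfl⟩
      have hmem' := Finset.orderEmbOfFin_mem _ (hccard w) (j ⟨0, h0⟩)
      rw [Finset.mem_compl, Set.Finite.mem_toFinset] at hmem'
      exact hmem' hmem
    unfold occCount
    exact Nat.card_of_isEmpty
  let Φ : T → B := fun w =>
    ⟨⟨(Set.toFinite (occIndexSet v w.1)).toFinset, hcard w⟩,
     w.1 ∘ (((Set.toFinite (occIndexSet v w.1)).toFinset).orderEmbOfFin (hcard w)),
     ⟨w.1 ∘ (((Set.toFinite (occIndexSet v w.1)).toFinsetᶜ).orderEmbOfFin (hccard w)), havoid w⟩⟩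
  have hinj : Function.Injective Φ := by
    intro w w' h
    have h1 : (Φ w).1 = (Φ w').1 := congrArg Prod.fst h
    have h2 : (Φ w).2.1 = (Φ w').2.1 := congrArg (Prod.fst ∘ Prod.snd) h
    have h3 : ((Φ w).2.2 : Fin (n-s) → Fin k) = ((Φ w').2.2 : Fin (n-s) → Fin k) := by
      have := congrArg (Prod.snd ∘ Prod.snd) h
      exact congrArg Subtype.val this
    have hSS : (Set.toFinite (occIndexSet v w.1)).toFinset
        = (Set.toFinite (occIndexSet v w'.1)).toFinset := congrArg Subtype.val h1
    apply Subtype.ext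
    funext i
    by_cases hi : i ∈ (Set.toFinite (occIndexSet v w.1)).toFinset
    · have hr1 : i ∈ Set.range (((Set.toFinite (occIndexSet v w.1)).toFinset).orderEmbOfFin (hcard w)) := by
        rw [Finset.range_orderEmbOfFin]; exact_mod_cast hi
      obtain ⟨t, ht⟩ := hr1
      have hemb : (((Set.toFinite (occIndexSet v w.1)).toFinset).orderEmbOfFin (hcard w)) t
          = (((Set.toFinite (occIndexSet v w'.1)).toFinset).orderEmbOfFin (hcard w')) t :=
        orderEmbOfFin_congr hSS _ _ t
      have e1 : w.1 i = (Φ w).2.1 t := by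
        show w.1 i = w.1 _
        rw [ht]
      have e2 : w'.1 i = (Φ w').2.1 t := by
        show w'.1 i = w'.1 _
        rw [← hemb, ht]
      rw [e1, e2, h2]
    · have hi' : i ∈ ((Set.toFinite (occIndexSet v w.1)).toFinset)ᶜ := Finset.mem_compl.2 hi
      have hr1 : i ∈ Set.range ((((Set.toFinite (occIndexSet v w.1)).toFinset)ᶜ).orderEmbOfFin (hccard w)) := by
        rw [Finset.range_orderEmbOfFin]; exact_mod_cast hi'
      obtain ⟨t, ht⟩ := hr1
      have hemb : ((((Set.toFinite (occIndexSet v w.1)).toFinset)ᶜ).orderEmbOfFin (hccard w)) t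
          = ((((Set.toFinite (occIndexSet v w'.1)).toFinset)ᶜ).orderEmbOfFin (hccard w')) t :=
        orderEmbOfFin_congr (by rw [hSS]) _ _ t
      have e1 : w.1 i = ((Φ w).2.2 : Fin (n-s) → Fin k) t := by
        show w.1 i = w.1 _
        rw [ht]
      have e2 : w'.1 i = ((Φ w').2.2 : Fin (n-s) → Fin k) t := by
        show w'.1 i = w'.1 _
        rw [← hemb, ht]
      rw [e1, e2, h3]
  have hle : Nat.card T ≤ Nat.card B := Nat.card_le_card_of_injective Φ hinj
  have hBcard : Nat.card B = n.choose s * (k ^ s * fword v 0 k (n - s)) := by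
    rw [hB, Nat.card_prod, Nat.card_prod]
    congr 1
    · rw [Nat.card_eq_fintype_card, Fintype.card_finset_len, Fintype.card_fin]
    · congr 1
      simp [Nat.card_eq_fintype_card]
  calc fwordOccSub v r s k n = Nat.card T := rfl
    _ ≤ Nat.card B := hle
    _ = k ^ s * Nat.choose n s * fword v 0 k (n - s) := by rw [hBcard]; ring
end

section
/- Let v be a pattern of length ℓ, and fix integers k ≥ 1, r ≥ 1 and n ≥ r·ℓ. Then f_r^v([k]^n) ≤ Σ_{s=ℓ}^{r·ℓ} k^s·C(n,s)·f_0^v([k]^{n-s}). (This uses the fact that any word with exactly r ≥ 1 occurrences of v has occurrence index set of cardinality s satisfying ℓ ≤ s ≤ r·ℓ.) -/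
open Finset

noncomputable def occFinset {l n k : ℕ} (v : Fin l → ℕ) (w : Fin n → Fin k) : Finset (Fin n) :=
  (Set.toFinite (occIndexSet v w)).toFinset

lemma mem_occFinset {l n k : ℕ} {v : Fin l → ℕ} {w : Fin n → Fin k} {i : Fin n} :
    i ∈ occFinset v w ↔ i ∈ occIndexSet v w := Set.Finite.mem_toFinset _

open scoped Classical in
lemma fword_eq {l : ℕ} (v : Fin l → ℕ) (r k n : ℕ) :
    fword v r k n = (univ.filter fun w : Fin n → Fin k => occCount v w = r).card := by
  rw [fword, Nat.card_eq_fintype_card, Fintype.card_subtype]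

open scoped Classical in
lemma occCount_eq_filter {l n k : ℕ} (v : Fin l → ℕ) (w : Fin n → Fin k) :
    occCount v w = (univ.filter fun j : Fin l → Fin n => IsOcc v w j).card := by
  rw [occCount, Nat.card_eq_fintype_card, Fintype.card_subtype]

lemma occCount_comp_eq_zero {l n k m : ℕ} (v : Fin l → ℕ) (hl : 0 < l)
    (w : Fin n → Fin k) (e : Fin m → Fin n) (he : StrictMono e)
    (hav : ∀ i, e i ∉ occIndexSet v w) :
    occCount v (w ∘ e) = 0 := by
  rw [occCount, Nat.card_eq_zero]
  left
  constructor
  rintro ⟨js, hjs⟩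
  have hcomp : IsOcc v w (e ∘ js) := ⟨he.comp hjs.1, fun p q => hjs.2 p q⟩
  exact hav (js ⟨0, hl⟩) ⟨e ∘ js, hcomp, ⟨0, hl⟩, rfl⟩

lemma card_occFinset_mem {l n k : ℕ} (v : Fin l → ℕ) (w : Fin n → Fin k) (r : ℕ) (hr : 1 ≤ r)
    (hw : occCount v w = r) :
    (occFinset v w).card ∈ Finset.Icc l (r * l) := by
  classical
  rw [occCount_eq_filter] at hw
  have hne : (univ.filter fun j : Fin l → Fin n => IsOcc v w j).Nonempty := by
    rw [← Finset.card_pos, hw]; omega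
  obtain ⟨j, hj⟩ := hne
  rw [Finset.mem_filter] at hj
  rw [Finset.mem_Icc]
  constructor
  · have hsub : Finset.image j univ ⊆ occFinset v w := by
      intro i hi
      rw [Finset.mem_image] at hi
      obtain ⟨p, _, hp⟩ := hi
      exact mem_occFinset.mpr ⟨j, hj.2, p, hp⟩
    calc l = (Finset.image j univ).card := by
            rw [Finset.card_image_of_injective _ hj.2.1.injective, Finset.card_univ,
              Fintype.card_fin]
      _ ≤ _ := Finset.card_le_card hsub
  · have hsub : occFinset v w ⊆
        (univ.filter fun j : Fin l → Fin n => IsOcc v w j).biUnion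
          (fun j => Finset.image j univ) := by
      intro i hi
      obtain ⟨js, hjs, p, hp⟩ := mem_occFinset.mp hi
      exact Finset.mem_biUnion.mpr ⟨js, Finset.mem_filter.mpr ⟨Finset.mem_univ _, hjs⟩,
        Finset.mem_image.mpr ⟨p, Finset.mem_univ _, hp⟩⟩
    calc (occFinset v w).card ≤ _ := Finset.card_le_card hsub
      _ ≤ ∑ j ∈ univ.filter fun j : Fin l → Fin n => IsOcc v w j,
            (Finset.image j univ).card := Finset.card_biUnion_le
      _ ≤ ∑ j ∈ univ.filter fun j : Fin l → Fin n => IsOcc v w j, l := by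
            refine Finset.sum_le_sum fun j _ => ?_
            calc (Finset.image j univ).card ≤ (univ : Finset (Fin l)).card :=
                  Finset.card_image_le
              _ = l := by simp
      _ = r * l := by rw [Finset.sum_const, hw, smul_eq_mul]

lemma recon {n k s : ℕ} {T₁ T₂ : Finset (Fin n)} (hT : T₁ = T₂) (h₁ : T₁.card = s)
    (h₂ : T₂.card = s) {w₁ w₂ : Fin n → Fin k}
    (ha : (fun i => w₁ ((T₁.orderIsoOfFin h₁ i : Fin n)))
        = (fun i => w₂ ((T₂.orderIsoOfFin h₂ i : Fin n))))
    {i : Fin n} (hi : i ∈ T₁) : w₁ i = w₂ i := by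
  subst hT
  have := congrFun ha ((T₁.orderIsoOfFin h₁).symm ⟨i, hi⟩)
  simpa using this

open scoped Classical in
lemma fiber_le {l : ℕ} (v : Fin l → ℕ) (hl : 2 ≤ l) (k r n s : ℕ) (hk : 1 ≤ k) :
    ((univ.filter fun w : Fin n → Fin k =>
        occCount v w = r ∧ (occFinset v w).card = s)).card
      ≤ k ^ s * n.choose s * fword v 0 k (n - s) := by
  set F : (Fin n → Fin k) → Finset (Fin n) × (Fin s → Fin k) × (Fin (n - s) → Fin k) :=
    fun w =>
      if h : (occFinset v w).card = s then
        ⟨occFinset v w,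
         fun i => w (((occFinset v w).orderIsoOfFin h i : Fin n)),
         fun i => w ((((occFinset v w)ᶜ).orderIsoOfFin
            (by rw [Finset.card_compl, h, Fintype.card_fin]) i : Fin n))⟩
      else ⟨∅, fun _ => ⟨0, hk⟩, fun _ => ⟨0, hk⟩⟩ with hF
  set B := ((univ.filter fun T : Finset (Fin n) => T.card = s) ×ˢ
      ((univ : Finset (Fin s → Fin k)) ×ˢ
        (univ.filter fun u : Fin (n - s) → Fin k => occCount v u = 0))) with hB
  have hmaps : ∀ w ∈ (univ.filter fun w : Fin n → Fin k =>
      occCount v w = r ∧ (occFinset v w).card = s), F w ∈ B := by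
    intro w hw
    rw [Finset.mem_filter] at hw
    obtain ⟨-, -, hcard⟩ := hw
    rw [hF]
    simp only [dif_pos hcard]
    rw [hB, Finset.mem_product, Finset.mem_product]
    refine ⟨Finset.mem_filter.mpr ⟨Finset.mem_univ _, hcard⟩, Finset.mem_univ _,
      Finset.mem_filter.mpr ⟨Finset.mem_univ _, ?_⟩⟩
    refine occCount_comp_eq_zero v (by omega) w _ ?_ ?_
    · exact fun a b hab => Subtype.coe_lt_coe.mpr
        ((((occFinset v w)ᶜ).orderIsoOfFin _).strictMono hab)
    · intro i hi
      have : (((occFinset v w)ᶜ).orderIsoOfFin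
          (by rw [Finset.card_compl, hcard, Fintype.card_fin]) i : Fin n) ∈
          (occFinset v w)ᶜ := Finset.coe_mem _
      rw [Finset.mem_compl] at this
      exact this (mem_occFinset.mpr hi)
  have hinj : Set.InjOn F (univ.filter fun w : Fin n → Fin k =>
      occCount v w = r ∧ (occFinset v w).card = s) := by
    intro w₁ hw₁ w₂ hw₂ heq
    simp only [Finset.coe_filter, Set.mem_setOf_eq] at hw₁ hw₂
    obtain ⟨-, h₁⟩ := hw₁
    obtain ⟨-, h₂⟩ := hw₂
    replace h₁ := h₁.2
    replace h₂ := h₂.2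
    rw [hF] at heq
    simp only [dif_pos h₁, dif_pos h₂, Prod.mk.injEq] at heq
    obtain ⟨hT, ha, hu⟩ := heq
    funext i
    by_cases hi : i ∈ occFinset v w₁
    · exact recon hT h₁ h₂ ha hi
    · have hi' : i ∈ (occFinset v w₁)ᶜ := Finset.mem_compl.mpr hi
      exact recon (by rw [hT]) (by rw [Finset.card_compl, h₁, Fintype.card_fin])
        (by rw [Finset.card_compl, h₂, Fintype.card_fin]) hu hi'
  calc ((univ.filter fun w : Fin n → Fin k =>
        occCount v w = r ∧ (occFinset v w).card = s)).card
      ≤ B.card := Finset.card_le_card_of_injOn F hmaps hinj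
    _ = k ^ s * n.choose s * fword v 0 k (n - s) := by
        rw [hB, Finset.card_product, Finset.card_product, Finset.card_univ, Fintype.card_fun,
          Fintype.card_fin, Fintype.card_fin, fword_eq]
        rw [show (univ.filter fun T : Finset (Fin n) => T.card = s).card = n.choose s from ?_]
        · ring
        · rw [← Fintype.card_subtype, Fintype.card_finset_len, Fintype.card_fin]

/-- For any pattern `v` of length `ℓ`, `k ≥ 1`, `r ≥ 1` and `n ≥ r·ℓ`:
`f_r^v([k]^n) ≤ Σ_{s=ℓ}^{r·ℓ} k^s·C(n,s)·f_0^v([k]^{n-s})`. -/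
theorem stmt_19 {l : ℕ} (v : Fin l → ℕ) (hl : 2 ≤ l)
    (k r n : ℕ) (hk : 1 ≤ k) (hr : 1 ≤ r) (hn : r * l ≤ n) :
    fword v r k n ≤
      ∑ s ∈ Finset.Icc l (r * l),
        k ^ s * Nat.choose n s * fword v 0 k (n - s) := by
  classical
  rw [fword_eq]
  rw [Finset.card_eq_sum_card_fiberwise
    (f := fun w : Fin n → Fin k => (occFinset v w).card) (t := Finset.Icc l (r * l))
    (fun w hw => card_occFinset_mem v w r hr (Finset.mem_filter.mp hw).2)]
  refine Finset.sum_le_sum fun s _ => ?_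
  rw [Finset.filter_filter]
  exact fiber_le v hl k r n s hk
end
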